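/- arXiv:2210.06549 — 2 statements merged into one kernel-verified Lean document; each statement's English description precedes it below -/
import Mathlib

section
/- Consider the many-to-one matching market with F = {f1, f2, f3}, W = {w1, w2, w3, w4} and substitutable (but not LAD) preferences: ≻_{f1}: {w1,w2}, {w1}, {w2}, {w3,w4}, {w3}, {w4}; ≻_{f2}: {w3}, {w1,w4}, {w4}, {w1,w2}, {w1}, {w2}; ≻_{f3}: {w4}, {w2,w3}, {w1,w2}, {w3}, {w1}, {w2}; ≻_{w1} = ≻_{w2}: f2, f3, f1; ≻_{w3}: f1, f3, f2; ≻_{w4}: f1, f2, f3. Then: (i) the worker-optimal stable matching μ_W(≻) assigns μ_W(f1) = {w3,w4}, μ_W(f2) = {w1,w2}, μ_W(f3) = ∅, and the firm-optimal stable matching μ_F(≻) assigns μ_F(f1) = {w1,w2}, μ_F(f2) = {w3}, μ_F(f3) = {w4}; (ii) under the worker-optimal stable rule h_W, although h_W(≻)(f1) = {w3,w4} ≠ {w1,w2} = μ_F(≻)(f1), the truncation strategy ≻'_{f1} = ≻_{f1}|_{{w1,w2}} (with acceptable sets {w1,w2}, {w1}, {w2}) yields μ_W(≻_{-f1}, ≻'_{f1})(f1)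 = ∅, which is strictly worse for f1 than h_W(≻)(f1) = {w3,w4} under ≻_{f1}; hence the strategy used in the proof of the General Manipulability Theorem fails when preferences are substitutable but do not satisfy LAD. -/
/-!
Common framework for many-to-many matching markets (Manasero–Oviedo,
"General Manipulability Theorem for a Matching Model").

Agents on each side have strict linear orders (strict total orders) over
finsets of the other side.  `Pref.Ch` is the choice function, selecting the
most preferred subset.
-/

/-- A strict preference of an agent over subsets of the (finite) set `α` of
potential partners: a strict total order on `Finset α`, where `gt S T` means
`S` is strictly preferred to `T`. -/
structure Pref (α : Type*) [DecidableEq α] [Fintype α] where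
  gt : Finset α → Finset α → Prop
  isSTO : IsStrictTotalOrder (Finset α) gt

namespace Pref

variable {α : Type*} [DecidableEq α] [Fintype α]

/-- The choice set `Ch(S, ≻)`: the `≻`-maximal subset of `S`. -/
noncomputable def Ch (p : Pref α) (S : Finset α) : Finset α := by
  classical
  haveI := p.isSTO
  haveI : IsStrictTotalOrder (Finset α) (Function.swap p.gt) := IsStrictTotalOrder.swap _
  exact @Finset.max' _ (linearOrderOfSTO (Function.swap p.gt)) S.powerset
    ⟨∅, Finset.empty_mem_powerset S⟩

/-- Substitutability: if `w ∈ Ch(S)` then `w ∈ Ch(S \ {w'})` for any other `w' ∈ S`. -/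
def Substitutable (p : Pref α) : Prop :=
  ∀ (S : Finset α) (w w' : α), w ∈ S → w' ∈ S → w ≠ w' →
    w ∈ p.Ch S → w ∈ p.Ch (S.erase w')

/-- Law of aggregate demand: `Y ⊆ X` implies `|Ch(Y)| ≤ |Ch(X)|`. -/
def LAD (p : Pref α) : Prop :=
  ∀ Y X : Finset α, Y ⊆ X → (p.Ch Y).card ≤ (p.Ch X).card

/-- `p.HasList L` : the sets in `L` are exactly the acceptable sets, in strictly
decreasing order of preference and all preferred to `∅`; any set not in the
list (other than `∅`) is unacceptable, i.e. worse than `∅`. -/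
def HasList (p : Pref α) (L : List (Finset α)) : Prop :=
  List.Chain' p.gt (L ++ [∅]) ∧ ∀ S : Finset α, S ∉ L → S ≠ ∅ → p.gt ∅ S

/-- `q`-separability of a preference with quota `q`. -/
def QSeparable (p : Pref α) (q : ℕ) : Prop :=
  (∀ S : Finset α, q < S.card → p.gt ∅ S) ∧
  (∀ (S : Finset α) (v : α), v ∉ S → S.card < q → (p.gt (insert v S) S ↔ p.gt {v} ∅))

end Pref

/-- `p'` is the restriction `p |_T` of `p` to `T`:
(i) any set not contained in `T` is worse than `∅`;
(ii) for `S ⊆ T`, `S ≻' ∅ ↔ S ≻ ∅`;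
(iii) for `S, S' ⊆ T`, `S ≻' S' ↔ S ≻ S'`. -/
def IsRestriction {α : Type*} [DecidableEq α] [Fintype α]
    (p : Pref α) (T : Finset α) (p' : Pref α) : Prop :=
  (∀ S : Finset α, ¬ S ⊆ T → p'.gt ∅ S) ∧
  (∀ S : Finset α, S ⊆ T → (p'.gt S ∅ ↔ p.gt S ∅)) ∧
  (∀ S S' : Finset α, S ⊆ T → S' ⊆ T → (p'.gt S S' ↔ p.gt S S'))

variable (F W : Type*) [DecidableEq F] [Fintype F] [DecidableEq W] [Fintype W]

/-- A (many-to-many) matching between firms `F` and workers `W`. -/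
structure Matching where
  fm : F → Finset W
  wm : W → Finset F
  compat : ∀ f w, w ∈ fm f ↔ f ∈ wm w

/-- A preference profile: one preference for each firm and each worker. -/
structure Profile where
  fp : F → Pref W
  wp : W → Pref F

variable {F W}

/-- All agents' preferences are substitutable. -/
def Profile.Substitutable (P : Profile F W) : Prop :=
  (∀ f, (P.fp f).Substitutable) ∧ (∀ w, (P.wp w).Substitutable)

/-- All agents' preferences satisfy the law of aggregate demand. -/
def Profile.LAD (P : Profile F W) : Prop :=
  (∀ f, (P.fp f).LAD) ∧ (∀ w, (P.wp w).LAD)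

/-- The profile obtained from `P` by replacing firm `f`'s preference by `p`. -/
def Profile.updateFirm (P : Profile F W) (f : F) (p : Pref W) : Profile F W :=
  ⟨Function.update P.fp f p, P.wp⟩

/-- The profile obtained from `P` by replacing worker `w`'s preference by `p`. -/
def Profile.updateWorker (P : Profile F W) (w : W) (p : Pref F) : Profile F W :=
  ⟨P.fp, Function.update P.wp w p⟩

/-- Individual rationality: every agent chooses its whole assignment. -/
def IndRational (P : Profile F W) (μ : Matching F W) : Prop :=
  (∀ f, (P.fp f).Ch (μ.fm f) = μ.fm f) ∧ (∀ w, (P.wp w).Ch (μ.wm w) = μ.wm w)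

/-- The pair `(w, f)` blocks the matching `μ`. -/
def Blocks (P : Profile F W) (μ : Matching F W) (w : W) (f : F) : Prop :=
  w ∉ μ.fm f ∧ w ∈ (P.fp f).Ch (insert w (μ.fm f)) ∧ f ∈ (P.wp w).Ch (insert f (μ.wm w))

/-- (Pairwise) stability. -/
def Stable (P : Profile F W) (μ : Matching F W) : Prop :=
  IndRational P μ ∧ ∀ w f, ¬ Blocks P μ w f

/-- `μF` is the firm-optimal stable matching for `P`. -/
def FirmOptimal (P : Profile F W) (μF : Matching F W) : Prop :=
  Stable P μF ∧ ∀ μ, Stable P μ → ∀ f, μF.fm f = μ.fm f ∨ (P.fp f).gt (μF.fm f) (μ.fm f)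

/-- `μW` is the worker-optimal stable matching for `P`. -/
def WorkerOptimal (P : Profile F W) (μW : Matching F W) : Prop :=
  Stable P μW ∧ ∀ μ, Stable P μ → ∀ w, μW.wm w = μ.wm w ∨ (P.wp w).gt (μW.wm w) (μ.wm w)

/-- Firm `f` satisfies the manipulability property (w.r.t. the rule `h`, the true
profile `P` and the firm-optimal stable matching `μF`): if `h(≻)(f) ≠ μF(≻)(f)`
then some report `≻'_f` (in the domain: substitutable and LAD) gives `f` a
strictly `≻_f`-better assignment. -/
def FirmManip (h : Profile F W → Matching F W) (P : Profile F W)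
    (μF : Matching F W) (f : F) : Prop :=
  (h P).fm f ≠ μF.fm f → ∃ p' : Pref W, p'.Substitutable ∧ p'.LAD ∧
    (P.fp f).gt ((h (P.updateFirm f p')).fm f) ((h P).fm f)

/-- Firm `f` satisfies the manipulability property with Blair order. -/
def FirmManipB (h : Profile F W → Matching F W) (P : Profile F W)
    (μF : Matching F W) (f : F) : Prop :=
  (h P).fm f ≠ μF.fm f → ∃ p' : Pref W, p'.Substitutable ∧ p'.LAD ∧
    ((P.fp f).Ch ((h (P.updateFirm f p')).fm f ∪ (h P).fm f) = (h (P.updateFirm f p')).fm f ∧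
      (h (P.updateFirm f p')).fm f ≠ (h P).fm f)

/-- Worker `w` satisfies the manipulability property. -/
def WorkerManip (h : Profile F W → Matching F W) (P : Profile F W)
    (μW : Matching F W) (w : W) : Prop :=
  (h P).wm w ≠ μW.wm w → ∃ p' : Pref F, p'.Substitutable ∧ p'.LAD ∧
    (P.wp w).gt ((h (P.updateWorker w p')).wm w) ((h P).wm w)

/-- Worker `w` satisfies the manipulability property with Blair order. -/
def WorkerManipB (h : Profile F W → Matching F W) (P : Profile F W)
    (μW : Matching F W) (w : W) : Prop :=
  (h P).wm w ≠ μW.wm w → ∃ p' : Pref F, p'.Substitutable ∧ p'.LAD ∧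
    ((P.wp w).Ch ((h (P.updateWorker w p')).wm w ∪ (h P).wm w) = (h (P.updateWorker w p')).wm w ∧
      (h (P.updateWorker w p')).wm w ≠ (h P).wm w)


/-!
A preference given by a ranked list chooses from `S` the first listed subset of `S`, so each
choice, and hence the stability of a concrete matching, can be evaluated. In `μW` every worker
and in `μF` every firm gets its top choice, which makes them optimal. Under the truncation,
`f₁` can employ only `w₁, w₂`, so `w₃, w₄` cannot work for it, and `w₂` cannot work for `f₂`
because then `(w₄, f₂)` would block. Hence no stable matching of the truncated market gives a
worker more than `μW'` does, in which `f₁` is unmatched.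

Agents are indexed from `0`: `fᵢ` is `i - 1 : Fin 3` and `wⱼ` is `j - 1 : Fin 4`.
-/

section ListPreferences

variable {α : Type*} [DecidableEq α]

def listCh (L : List (Finset α)) (S : Finset α) : Finset α :=
  ((L ++ [∅]).find? (· ⊆ S)).getD ∅

/-- Every unlisted set gets rank `L.length + 1`, although a preference with list `L` may order
the unlisted sets arbitrarily among themselves. -/
def listRank (L : List (Finset α)) (S : Finset α) : ℕ :=
  (L ++ [∅]).idxOf S

theorem listRank_cons_pos {C S : Finset α} {L : List (Finset α)} (h : C ≠ S) :
    0 < listRank (C :: L) S := by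
  simp [listRank, h]

theorem listCh_spec (L : List (Finset α)) (S : Finset α) :
    ∃ as bs, L ++ [∅] = as ++ listCh L S :: bs ∧ listCh L S ⊆ S ∧ ∀ T ∈ as, ¬ T ⊆ S := by
  obtain ⟨C, hC⟩ : ∃ C, (L ++ [∅]).find? (· ⊆ S) = some C :=
    Option.isSome_iff_exists.mp (List.find?_isSome.mpr ⟨∅, by simp, by simp⟩)
  obtain ⟨hCS, as, bs, hsplit, has⟩ := List.find?_eq_some_iff_append.mp hC
  refine ⟨as, bs, ?_, ?_, fun T hT => by simpa using has T hT⟩ <;> simp_all [listCh]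

theorem listCh_mem (L : List (Finset α)) (S : Finset α) : listCh L S ∈ L ++ [∅] := by
  obtain ⟨as, bs, hsplit, -⟩ := listCh_spec L S
  simp [hsplit]

end ListPreferences

namespace Pref

variable {α : Type*} [DecidableEq α] [Fintype α]

theorem Ch_eq_of_forall_gt (p : Pref α) {S C : Finset α} (hCS : C ⊆ S)
    (h : ∀ T ⊆ S, T ≠ C → p.gt C T) : p.Ch S = C := by
  classical
  have := p.isSTO
  have hsub : p.Ch S ⊆ S := by
    unfold Ch
    exact Finset.mem_powerset.mp
      (@Finset.max'_mem _ (linearOrderOfSTO (Function.swap p.gt)) _ _)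
  have hmax : C = p.Ch S ∨ p.gt (p.Ch S) C := by
    unfold Ch
    exact @Finset.le_max' _ (linearOrderOfSTO (Function.swap p.gt)) _ C
      (Finset.mem_powerset.mpr hCS)
  by_contra hne
  exact hmax.elim (fun hC => hne hC.symm) fun hgt => asymm hgt (h _ hsub hne)

theorem HasList.pairwise {p : Pref α} {L : List (Finset α)} (h : p.HasList L) :
    (L ++ [∅]).Pairwise p.gt :=
  have := p.isSTO
  List.isChain_iff_pairwise.mp h.1

theorem HasList.gt_empty {p : Pref α} {L : List (Finset α)} (h : p.HasList L) {C : Finset α}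
    (hC : C ∈ L) : p.gt C ∅ :=
  (List.pairwise_append.mp h.pairwise).2.2 C hC ∅ (List.mem_singleton_self _)

theorem HasList.gt_of_eq_append {p : Pref α} {L : List (Finset α)} (h : p.HasList L)
    {as bs : List (Finset α)} {C T : Finset α} (hsplit : L ++ [∅] = as ++ C :: bs)
    (hT : T ∉ as) (hTC : T ≠ C) : p.gt C T := by
  have := p.isSTO
  have hC : C ∈ L ++ [∅] := by simp [hsplit]
  by_cases hTL : T ∈ L ++ [∅]
  · have hpw := h.pairwise
    rw [hsplit] at hpw hTL
    have hTbs : T ∈ bs := by simpa [hT, hTC] using hTL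
    exact (List.pairwise_cons.mp (List.pairwise_append.mp hpw).2.1).1 T hTbs
  · have hT0 : p.gt ∅ T :=
      h.2 T (fun hT => hTL (List.mem_append_left _ hT)) (by rintro rfl; simp at hTL)
    rcases List.mem_append.mp hC with hCL | hC0
    · exact _root_.trans (h.gt_empty hCL) hT0
    · rwa [List.mem_singleton.mp hC0]

theorem HasList.Ch_eq_listCh {p : Pref α} {L : List (Finset α)} (h : p.HasList L)
    (S : Finset α) : p.Ch S = listCh L S := by
  obtain ⟨as, bs, hsplit, hCS, has⟩ := listCh_spec L S
  exact p.Ch_eq_of_forall_gt hCS fun T hTS hTC => h.gt_of_eq_append hsplit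
    (fun hT => has T hT hTS) hTC

theorem HasList.mem_of_Ch_eq_self {p : Pref α} {L : List (Finset α)} (h : p.HasList L)
    {S : Finset α} (hS : p.Ch S = S) : S ∈ L ++ [∅] := by
  rw [← hS, h.Ch_eq_listCh]
  exact listCh_mem L S

theorem HasList.eq_or_gt_of_listRank_le {p : Pref α} {L : List (Finset α)} (h : p.HasList L)
    {C T : Finset α} (hC : C ∈ L ++ [∅]) (hCT : listRank L C ≤ listRank L T) :
    C = T ∨ p.gt C T := by
  obtain ⟨D, hD⟩ : ∃ D, (L ++ [∅]).find? (C == ·) = some D :=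
    Option.isSome_iff_exists.mp (List.find?_isSome.mpr ⟨C, hC, beq_self_eq_true C⟩)
  obtain ⟨hDC, as, bs, hsplit, has⟩ := List.find?_eq_some_iff_append.mp hD
  obtain rfl : C = D := by simpa using hDC
  have hCas : C ∉ as := fun hC' => by simpa using has C hC'
  rcases eq_or_ne T C with rfl | hTC
  · exact Or.inl rfl
  refine Or.inr (h.gt_of_eq_append hsplit (fun hT => ?_) hTC)
  have hrankC : listRank L C = as.length := by
    simp [listRank, hsplit, List.idxOf_append_of_notMem hCas]
  have hrankT : listRank L T < as.length := by
    rw [listRank, hsplit, List.idxOf_append, if_pos hT]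
    exact List.idxOf_lt_length_of_mem hT
  omega

end Pref

def Matching.ofFirms (fm : F → Finset W) : Matching F W where
  fm := fm
  wm w := Finset.univ.filter (w ∈ fm ·)
  compat f w := by simp

theorem Profile.hasList_updateFirm {P : Profile F W} {LF : F → List (Finset W)}
    (hF : ∀ f, (P.fp f).HasList (LF f)) {f : F} {p : Pref W} {L : List (Finset W)}
    (hp : p.HasList L) (g : F) :
    ((P.updateFirm f p).fp g).HasList (Function.update LF f L g) := by
  by_cases hg : g = f
  · subst hg
    simpa [Profile.updateFirm] using hp
  · simpa [Profile.updateFirm, hg] using hF g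

section ListProfile

variable {P : Profile F W} {LF : F → List (Finset W)} {LW : W → List (Finset F)}

theorem stable_iff_listCh (hF : ∀ f, (P.fp f).HasList (LF f))
    (hW : ∀ w, (P.wp w).HasList (LW w)) (μ : Matching F W) :
    Stable P μ ↔
      ((∀ f, listCh (LF f) (μ.fm f) = μ.fm f) ∧ ∀ w, listCh (LW w) (μ.wm w) = μ.wm w) ∧
      ∀ w f, ¬ (w ∉ μ.fm f ∧ w ∈ listCh (LF f) (insert w (μ.fm f)) ∧
        f ∈ listCh (LW w) (insert f (μ.wm w))) := by
  simp only [Stable, IndRational, Blocks, fun f => (hF f).Ch_eq_listCh,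
    fun w => (hW w).Ch_eq_listCh]

theorem workerOptimal_of_listRank_le (hW : ∀ w, (P.wp w).HasList (LW w)) {μW : Matching F W}
    (hμW : Stable P μW)
    (hbest : ∀ μ, Stable P μ → ∀ w, listRank (LW w) (μW.wm w) ≤ listRank (LW w) (μ.wm w)) :
    WorkerOptimal P μW :=
  ⟨hμW, fun μ hμ w =>
    (hW w).eq_or_gt_of_listRank_le ((hW w).mem_of_Ch_eq_self (hμW.1.2 w)) (hbest μ hμ w)⟩

theorem firmOptimal_of_listRank_le (hF : ∀ f, (P.fp f).HasList (LF f)) {μF : Matching F W}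
    (hμF : Stable P μF)
    (hbest : ∀ μ, Stable P μ → ∀ f, listRank (LF f) (μF.fm f) ≤ listRank (LF f) (μ.fm f)) :
    FirmOptimal P μF :=
  ⟨hμF, fun μ hμ f =>
    (hF f).eq_or_gt_of_listRank_le ((hF f).mem_of_Ch_eq_self (hμF.1.1 f)) (hbest μ hμ f)⟩

end ListProfile

namespace TruncationExample

def firmLists : Fin 3 → List (Finset (Fin 4)) :=
  ![[{0, 1}, {0}, {1}, {2, 3}, {2}, {3}], [{2}, {0, 3}, {3}, {0, 1}, {0}, {1}],
    [{3}, {1, 2}, {0, 1}, {2}, {0}, {1}]]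

def workerLists : Fin 4 → List (Finset (Fin 3)) :=
  ![[{1}, {2}, {0}], [{1}, {2}, {0}], [{0}, {2}, {1}], [{0}, {1}, {2}]]

def truncatedFirmLists : Fin 3 → List (Finset (Fin 4)) :=
  Function.update firmLists 0 [{0, 1}, {0}, {1}]

def workerOptimalMatching : Matching (Fin 3) (Fin 4) := .ofFirms ![{2, 3}, {0, 1}, ∅]

def firmOptimalMatching : Matching (Fin 3) (Fin 4) := .ofFirms ![{0, 1}, {2}, {3}]

def truncatedMatching : Matching (Fin 3) (Fin 4) := .ofFirms ![∅, {0, 3}, {1, 2}]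

variable {P : Profile (Fin 3) (Fin 4)}

theorem workerOptimal_workerOptimalMatching (hF : ∀ f, (P.fp f).HasList (firmLists f))
    (hW : ∀ w, (P.wp w).HasList (workerLists w)) : WorkerOptimal P workerOptimalMatching := by
  refine workerOptimal_of_listRank_le hW ((stable_iff_listCh hF hW _).2 (by decide))
    fun μ _ w => ?_
  have htop : listRank (workerLists w) (workerOptimalMatching.wm w) = 0 := by
    revert w; decide
  exact htop ▸ Nat.zero_le _

theorem firmOptimal_firmOptimalMatching (hF : ∀ f, (P.fp f).HasList (firmLists f))
    (hW : ∀ w, (P.wp w).HasList (workerLists w)) : FirmOptimal P firmOptimalMatching := by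
  refine firmOptimal_of_listRank_le hF ((stable_iff_listCh hF hW _).2 (by decide))
    fun μ _ f => ?_
  have htop : listRank (firmLists f) (firmOptimalMatching.fm f) = 0 := by
    revert f; decide
  exact htop ▸ Nat.zero_le _

theorem fm_zero_subset_of_stable_truncated
    (hF : ∀ f, (P.fp f).HasList (truncatedFirmLists f)) {μ : Matching (Fin 3) (Fin 4)}
    (hμ : Stable P μ) : μ.fm 0 ⊆ {0, 1} :=
  (by decide : ∀ A ∈ truncatedFirmLists 0 ++ [∅], A ⊆ {0, 1}) _
    ((hF 0).mem_of_Ch_eq_self (hμ.1.1 0))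

theorem wm_ne_singleton_zero_of_stable_truncated
    (hF : ∀ f, (P.fp f).HasList (truncatedFirmLists f)) {μ : Matching (Fin 3) (Fin 4)}
    (hμ : Stable P μ) {w : Fin 4} (hw : w ∉ ({0, 1} : Finset (Fin 4))) : μ.wm w ≠ {0} := fun hw0 =>
  hw (fm_zero_subset_of_stable_truncated hF hμ ((μ.compat 0 w).mpr (by simp [hw0])))

theorem wm_one_ne_singleton_one_of_stable_truncated
    (hF : ∀ f, (P.fp f).HasList (truncatedFirmLists f))
    (hW : ∀ w, (P.wp w).HasList (workerLists w)) {μ : Matching (Fin 3) (Fin 4)}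
    (hμ : Stable P μ) : μ.wm 1 ≠ {1} := by
  intro h1
  -- otherwise `(w₄, f₂)` blocks: f₂ would rather add w₄, and w₄ can be employed only by f₃
  have hchoice₂ : ∀ A ∈ truncatedFirmLists 1 ++ [∅], 1 ∈ A →
      3 ∉ A ∧ 3 ∈ listCh (truncatedFirmLists 1) (insert 3 A) := by decide
  have hchoice₄ : ∀ B ∈ workerLists 3 ++ [∅], 0 ∉ B → 1 ∉ B →
      1 ∈ listCh (workerLists 3) (insert 1 B) := by decide
  obtain ⟨h3, hblock₂⟩ := hchoice₂ _ ((hF 1).mem_of_Ch_eq_self (hμ.1.1 1))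
    ((μ.compat 1 1).mpr (by simp [h1]))
  have h0 : 0 ∉ μ.wm 3 := fun h =>
    absurd (fm_zero_subset_of_stable_truncated hF hμ ((μ.compat 0 3).mpr h)) (by decide)
  have h1 : 1 ∉ μ.wm 3 := fun h => h3 ((μ.compat 1 3).mpr h)
  refine hμ.2 3 1 ⟨h3, (hF 1).Ch_eq_listCh _ ▸ hblock₂, ?_⟩
  rw [(hW 3).Ch_eq_listCh]
  exact hchoice₄ _ ((hW 3).mem_of_Ch_eq_self (hμ.1.2 3)) h0 h1

theorem listRank_truncatedMatching_le (hF : ∀ f, (P.fp f).HasList (truncatedFirmLists f))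
    (hW : ∀ w, (P.wp w).HasList (workerLists w)) {μ : Matching (Fin 3) (Fin 4)}
    (hμ : Stable P μ) (w : Fin 4) :
    listRank (workerLists w) (truncatedMatching.wm w) ≤ listRank (workerLists w) (μ.wm w) := by
  have hrank : ∀ w,
      listRank (workerLists w) (truncatedMatching.wm w) = if w = 0 then 0 else 1 := by
    decide
  rw [hrank]
  obtain rfl | rfl | rfl | rfl : w = 0 ∨ w = 1 ∨ w = 2 ∨ w = 3 := by revert w; decide
  · exact Nat.zero_le _
  · exact listRank_cons_pos (wm_one_ne_singleton_one_of_stable_truncated hF hW hμ).symm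
  · exact listRank_cons_pos (wm_ne_singleton_zero_of_stable_truncated hF hμ (by decide)).symm
  · exact listRank_cons_pos (wm_ne_singleton_zero_of_stable_truncated hF hμ (by decide)).symm

theorem workerOptimal_truncatedMatching (hF : ∀ f, (P.fp f).HasList (truncatedFirmLists f))
    (hW : ∀ w, (P.wp w).HasList (workerLists w)) : WorkerOptimal P truncatedMatching :=
  workerOptimal_of_listRank_le hW ((stable_iff_listCh hF hW _).2 (by decide))
    fun _ hμ => listRank_truncatedMatching_le hF hW hμ

end TruncationExample

open TruncationExample in
theorem stmt11_general (P : Profile (Fin 3) (Fin 4))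
    (hf1 : (P.fp 0).HasList [{0, 1}, {0}, {1}, {2, 3}, {2}, {3}])
    (hf2 : (P.fp 1).HasList [{2}, {0, 3}, {3}, {0, 1}, {0}, {1}])
    (hf3 : (P.fp 2).HasList [{3}, {1, 2}, {0, 1}, {2}, {0}, {1}])
    (hw1 : (P.wp 0).HasList [{1}, {2}, {0}])
    (hw2 : (P.wp 1).HasList [{1}, {2}, {0}])
    (hw3 : (P.wp 2).HasList [{0}, {2}, {1}])
    (hw4 : (P.wp 3).HasList [{0}, {1}, {2}])
    (p' : Pref (Fin 4)) (hp'list : p'.HasList [{0, 1}, {0}, {1}]) :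
    ∃ μW μF μW' : Matching (Fin 3) (Fin 4),
      -- (i)
      WorkerOptimal P μW ∧ FirmOptimal P μF ∧
      μW.fm 0 = {2, 3} ∧ μW.fm 1 = {0, 1} ∧ μW.fm 2 = ∅ ∧
      μF.fm 0 = {0, 1} ∧ μF.fm 1 = {2} ∧ μF.fm 2 = {3} ∧
      -- (ii)
      μW.fm 0 ≠ μF.fm 0 ∧
      WorkerOptimal (P.updateFirm 0 p') μW' ∧
      μW'.fm 0 = ∅ ∧
      (P.fp 0).gt (μW.fm 0) (μW'.fm 0) := by
  have hF : ∀ f, (P.fp f).HasList (firmLists f) := by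
    intro f; fin_cases f; exacts [hf1, hf2, hf3]
  have hW : ∀ w, (P.wp w).HasList (workerLists w) := by
    intro w; fin_cases w; exacts [hw1, hw2, hw3, hw4]
  refine ⟨workerOptimalMatching, firmOptimalMatching, truncatedMatching,
    workerOptimal_workerOptimalMatching hF hW, firmOptimal_firmOptimalMatching hF hW,
    rfl, rfl, rfl, rfl, rfl, rfl, by decide,
    workerOptimal_truncatedMatching (Profile.hasList_updateFirm hF hp'list) hW, rfl, ?_⟩
  exact ((hF 0).eq_or_gt_of_listRank_le (by decide) (by decide)).resolve_left (by decide)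

/-- Example 1 of Section 5.  Many-to-one market with
`F = {f₁, f₂, f₃}` (encoded `Fin 3`) and `W = {w₁, w₂, w₃, w₄}` (encoded `Fin 4`),
with the substitutable—but not LAD—preferences of the paper.  Then:
(i) the worker-optimal stable matching `μW` is `f₁ ↦ {w₃, w₄}, f₂ ↦ {w₁, w₂}, f₃ ↦ ∅`
and the firm-optimal stable matching `μF` is `f₁ ↦ {w₁, w₂}, f₂ ↦ {w₃}, f₃ ↦ {w₄}`;
(ii) under the worker-optimal stable rule, although `μW(f₁) = {w₃, w₄} ≠ {w₁, w₂} = μF(f₁)`,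
the truncation `≻'_{f₁} = ≻_{f₁}|_{{w₁, w₂}}` leaves `f₁` unmatched at the
worker-optimal stable matching `μW'` of the misreported profile, an outcome strictly
worse for `f₁` (w.r.t. its true preference) than `μW(f₁) = {w₃, w₄}`. -/
theorem stmt11 (P : Profile (Fin 3) (Fin 4))
    (hsub : P.Substitutable) (hnolad : ¬ (P.fp 0).LAD)
    (hf1 : (P.fp 0).HasList [{0, 1}, {0}, {1}, {2, 3}, {2}, {3}])
    (hf2 : (P.fp 1).HasList [{2}, {0, 3}, {3}, {0, 1}, {0}, {1}])
    (hf3 : (P.fp 2).HasList [{3}, {1, 2}, {0, 1}, {2}, {0}, {1}])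
    (hw1 : (P.wp 0).HasList [{1}, {2}, {0}])
    (hw2 : (P.wp 1).HasList [{1}, {2}, {0}])
    (hw3 : (P.wp 2).HasList [{0}, {2}, {1}])
    (hw4 : (P.wp 3).HasList [{0}, {1}, {2}])
    (p' : Pref (Fin 4)) (hp'list : p'.HasList [{0, 1}, {0}, {1}])
    (hp'res : IsRestriction (P.fp 0) {0, 1} p') :
    ∃ μW μF μW' : Matching (Fin 3) (Fin 4),
      -- (i)
      WorkerOptimal P μW ∧ FirmOptimal P μF ∧
      μW.fm 0 = {2, 3} ∧ μW.fm 1 = {0, 1} ∧ μW.fm 2 = ∅ ∧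
      μF.fm 0 = {0, 1} ∧ μF.fm 1 = {2} ∧ μF.fm 2 = {3} ∧
      -- (ii)
      μW.fm 0 ≠ μF.fm 0 ∧
      WorkerOptimal (P.updateFirm 0 p') μW' ∧
      μW'.fm 0 = ∅ ∧
      (P.fp 0).gt (μW.fm 0) (μW'.fm 0) :=
  stmt11_general P hf1 hf2 hf3 hw1 hw2 hw3 hw4 p' hp'list
end

section
/- The General Manipulability Theorem is false when agents' preferences are only assumed to be substitutable: there exists a many-to-one matching market (F, W, ≻) with substitutable preferences, a stable matching rule h (namely the firm-optimal stable rule h_F), and an agent a ∈ W with h(≻)(a) ≠ μ_W(≻)(a), such that for every possible misreport ≻'_a of agent a, h(≻_{-a}, ≻'_a)(a) is not strictly ≻_a-preferred to h(≻)(a). -/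
variable (F W : Type*) [DecidableEq F] [Fintype F] [DecidableEq W] [Fintype W]

variable {F W}

/-!
For substitutable preferences the firm-optimal stable matching exists: take the greatest fixed
point `(A, B)` of the Hatfield–Milgrom deferred-acceptance operator and let each firm `f` choose
from `A f`. Every stable matching `μ` yields a post-fixed point, so `μ(f) ⊆ A f`, and `f` weakly
prefers its choice from `A f` to `μ(f)`.

In the market below, with two firms and three unit-demand workers, both firms get their favourite
set of workers at the firm-optimal matching `μFex`, where worker `0` is unmatched, while worker `0`
is employed at the worker-optimal matching `μWex`. No firm wants worker `0` in addition to its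
`μFex` assignment, so whatever worker `0` reports, `μFex` stays stable, hence firm-optimal, and
worker `0` stays unmatched.
-/

namespace Pref

variable {α : Type*} [DecidableEq α] [Fintype α]

lemma gt_irrefl (p : Pref α) (S : Finset α) : ¬ p.gt S S :=
  @irrefl _ p.gt p.isSTO.toIrrefl S

lemma gt_asymm (p : Pref α) {S T : Finset α} (h : p.gt S T) : ¬ p.gt T S := by
  have := p.isSTO
  exact asymm h

lemma Ch_subset (p : Pref α) (S : Finset α) : p.Ch S ⊆ S := by
  classical
  have := p.isSTO
  unfold Ch
  simpa [Finset.mem_powerset] using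
    @Finset.max'_mem _ (linearOrderOfSTO (Function.swap p.gt)) S.powerset
      ⟨∅, Finset.empty_mem_powerset S⟩

lemma Ch_max (p : Pref α) {S T : Finset α} (hT : T ⊆ S) : T = p.Ch S ∨ p.gt (p.Ch S) T := by
  classical
  have := p.isSTO
  unfold Ch
  exact @Finset.le_max' _ (linearOrderOfSTO (Function.swap p.gt)) S.powerset T
    (Finset.mem_powerset.2 hT)

lemma Ch_eq_of (p : Pref α) {S T : Finset α} (hT : T ⊆ S)
    (h : ∀ U ⊆ S, U ≠ T → p.gt T U) : p.Ch S = T := by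
  by_contra hne
  rcases p.Ch_max hT with h1 | h1
  · exact hne h1.symm
  · exact p.gt_asymm h1 (h _ (p.Ch_subset S) hne)

lemma Ch_empty (p : Pref α) : p.Ch ∅ = ∅ :=
  Finset.subset_empty.1 (p.Ch_subset ∅)

/-- Irrelevance of rejected partners. -/
lemma Ch_eq_Ch_of_subset (p : Pref α) {S T : Finset α} (h1 : p.Ch T ⊆ S) (h2 : S ⊆ T) :
    p.Ch S = p.Ch T := by
  refine p.Ch_eq_of h1 fun U hU hne => ?_
  rcases p.Ch_max (hU.trans h2) with h3 | h3
  · exact absurd h3 hne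
  · exact h3

lemma Ch_idem (p : Pref α) (S : Finset α) : p.Ch (p.Ch S) = p.Ch S :=
  p.Ch_eq_Ch_of_subset subset_rfl (p.Ch_subset S)

lemma mem_Ch_insert_of_mem_Ch_insert_Ch (p : Pref α) {S : Finset α} {x : α}
    (h : x ∈ p.Ch (insert x (p.Ch S))) : x ∈ p.Ch (insert x S) := by
  by_contra hx
  have hS : p.Ch (insert x S) ⊆ S := fun y hy =>
    (Finset.mem_insert.1 (p.Ch_subset _ hy)).resolve_left (by rintro rfl; exact hx hy)
  have hCh : p.Ch S = p.Ch (insert x S) := p.Ch_eq_Ch_of_subset hS (Finset.subset_insert x S)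
  have h' : p.Ch (insert x (p.Ch S)) = p.Ch (insert x S) :=
    p.Ch_eq_Ch_of_subset (hCh ▸ Finset.subset_insert x _)
      (Finset.insert_subset_insert x (p.Ch_subset S))
  exact hx (h' ▸ h)

lemma Substitutable.mem_Ch_of_subset {p : Pref α} (hp : p.Substitutable) {S T : Finset α}
    {w : α} (hST : S ⊆ T) (hw : w ∈ S) (h : w ∈ p.Ch T) : w ∈ p.Ch S := by
  induction T using Finset.strongInduction generalizing S with
  | _ T ih =>
    rcases eq_or_ssubset_of_subset hST with rfl | hss
    · exact h
    · obtain ⟨w', hw'T, hw'S⟩ := Finset.exists_of_ssubset hss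
      exact ih _ (Finset.erase_ssubset hw'T) (Finset.subset_erase.2 ⟨hST, hw'S⟩) hw
        (hp T w w' (hST hw) hw'T (by rintro rfl; exact hw'S hw) h)

lemma Substitutable.Ch_union_eq {p : Pref α} (hp : p.Substitutable) {X D : Finset α}
    (hX : p.Ch X = X) (hD : ∀ w ∈ D, w ∉ X → w ∉ p.Ch (insert w X)) :
    p.Ch (X ∪ D) = X := by
  by_cases hsub : p.Ch (X ∪ D) ⊆ X
  · rw [← p.Ch_eq_Ch_of_subset hsub Finset.subset_union_left, hX]
  · obtain ⟨w, hwCh, hwX⟩ := Finset.not_subset.1 hsub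
    have hwD : w ∈ D := (Finset.mem_union.1 (p.Ch_subset _ hwCh)).resolve_left hwX
    exact absurd (hp.mem_Ch_of_subset
      (Finset.insert_subset (Finset.mem_union_right _ hwD) Finset.subset_union_left)
      (Finset.mem_insert_self w X) hwCh) (hD w hwD hwX)

def UnitDemand (p : Pref α) : Prop :=
  ∀ S : Finset α, 2 ≤ S.card → p.gt ∅ S

lemma UnitDemand.card_Ch_le_one {p : Pref α} (hp : p.UnitDemand) (S : Finset α) :
    (p.Ch S).card ≤ 1 := by
  by_contra! hcard
  rcases p.Ch_max (Finset.empty_subset S) with h | h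
  · rw [← h, Finset.card_empty] at hcard
    omega
  · exact p.gt_asymm h (hp _ hcard)

lemma UnitDemand.substitutable {p : Pref α} (hp : p.UnitDemand) : p.Substitutable := by
  intro S w w' hw hw' hne hch
  have hsing : p.Ch S = {w} :=
    Finset.eq_singleton_iff_unique_mem.2
      ⟨hch, fun x hx => Finset.card_le_one.1 (hp.card_Ch_le_one S) x hx w hch⟩
  have hsub : p.Ch S ⊆ S.erase w' := by
    rw [hsing, Finset.singleton_subset_iff]
    exact Finset.mem_erase.2 ⟨hne, hw⟩
  rw [p.Ch_eq_Ch_of_subset hsub (Finset.erase_subset w' S)]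
  exact hch

end Pref

noncomputable section FirmOptimal

variable {F W : Type*} [DecidableEq F] [Fintype F] [DecidableEq W] [Fintype W]

namespace Profile

variable (P : Profile F W)

def willingWorkers (B : W → Finset F) (f : F) : Finset W :=
  Finset.univ.filter fun w => f ∈ (P.wp w).Ch (insert f (B w))

def willingFirms (A : F → Finset W) (w : W) : Finset F :=
  Finset.univ.filter fun f => w ∈ (P.fp f).Ch (insert w (A f))

variable {P}

lemma mem_willingWorkers {B : W → Finset F} {f : F} {w : W} :
    w ∈ P.willingWorkers B f ↔ f ∈ (P.wp w).Ch (insert f (B w)) := by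
  simp [willingWorkers]

lemma mem_willingFirms {A : F → Finset W} {w : W} {f : F} :
    f ∈ P.willingFirms A w ↔ w ∈ (P.fp f).Ch (insert w (A f)) := by
  simp [willingFirms]

lemma willingWorkers_anti (hs : ∀ w, (P.wp w).Substitutable) {B B' : W → Finset F}
    (hB : ∀ w, B w ⊆ B' w) (f : F) : P.willingWorkers B' f ⊆ P.willingWorkers B f :=
  fun w hw => mem_willingWorkers.2 <| (hs w).mem_Ch_of_subset
    (Finset.insert_subset_insert f (hB w)) (Finset.mem_insert_self f _) (mem_willingWorkers.1 hw)

lemma willingFirms_anti (hs : ∀ f, (P.fp f).Substitutable) {A A' : F → Finset W}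
    (hA : ∀ f, A f ⊆ A' f) (w : W) : P.willingFirms A' w ⊆ P.willingFirms A w :=
  fun f hf => mem_willingFirms.2 <| (hs f).mem_Ch_of_subset
    (Finset.insert_subset_insert w (hA f)) (Finset.mem_insert_self w _) (mem_willingFirms.1 hf)

end Profile

local instance : CompleteLattice (Finset W) := Fintype.toCompleteLattice _
local instance : CompleteLattice (Finset F) := Fintype.toCompleteLattice _

/-- Prematchings: the workers available to each firm and the firms available to each worker, the
latter ordered reversely so that deferred acceptance is monotone. -/
abbrev Prematching (F W : Type*) [DecidableEq F] [Fintype F] [DecidableEq W] [Fintype W] :=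
  (F → Finset W) × (W → Finset F)ᵒᵈ

def deferredAcceptance (P : Profile F W) (hs : P.Substitutable) :
    Prematching F W →o Prematching F W where
  toFun X := (P.willingWorkers (OrderDual.ofDual X.2), OrderDual.toDual (P.willingFirms X.1))
  monotone' _ _ hXY :=
    ⟨Profile.willingWorkers_anti hs.2 hXY.2, Profile.willingFirms_anti hs.1 hXY.1⟩

def matchingOfFixedPoint (P : Profile F W) {A : F → Finset W} {B : W → Finset F}
    (hA : P.willingWorkers B = A) (hB : P.willingFirms A = B) : Matching F W where
  fm f := (P.fp f).Ch (A f)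
  wm w := (P.wp w).Ch (B w)
  compat f w := by
    have hwA : w ∈ A f ↔ f ∈ (P.wp w).Ch (insert f (B w)) := hA ▸ Profile.mem_willingWorkers
    have hfB : f ∈ B w ↔ w ∈ (P.fp f).Ch (insert w (A f)) := hB ▸ Profile.mem_willingFirms
    constructor
    · intro h
      have hw : w ∈ A f := (P.fp f).Ch_subset _ h
      have hf : f ∈ B w := hfB.2 (by rwa [Finset.insert_eq_of_mem hw])
      simpa only [Finset.insert_eq_of_mem hf] using hwA.1 hw
    · intro h
      have hf : f ∈ B w := (P.wp w).Ch_subset _ h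
      have hw : w ∈ A f := hwA.2 (by rwa [Finset.insert_eq_of_mem hf])
      simpa only [Finset.insert_eq_of_mem hw] using hfB.1 hf

lemma stable_matchingOfFixedPoint (P : Profile F W) {A : F → Finset W} {B : W → Finset F}
    (hA : P.willingWorkers B = A) (hB : P.willingFirms A = B) :
    Stable P (matchingOfFixedPoint P hA hB) := by
  refine ⟨⟨fun f => (P.fp f).Ch_idem _, fun w => (P.wp w).Ch_idem _⟩, ?_⟩
  rintro w f ⟨hnm, hwf, hfw⟩
  have hw : w ∈ A f :=
    hA ▸ Profile.mem_willingWorkers.2 ((P.wp w).mem_Ch_insert_of_mem_Ch_insert_Ch hfw)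
  have hwCh := (P.fp f).mem_Ch_insert_of_mem_Ch_insert_Ch hwf
  rw [Finset.insert_eq_of_mem hw] at hwCh
  exact hnm hwCh

lemma Stable.wm_subset_willingFirms {P : Profile F W} {μ : Matching F W} (hμ : Stable P μ)
    (w : W) : μ.wm w ⊆ P.willingFirms μ.fm w := by
  intro f hf
  have hw : w ∈ μ.fm f := (μ.compat f w).2 hf
  rw [Profile.mem_willingFirms, Finset.insert_eq_of_mem hw, hμ.1.1 f]
  exact hw

lemma Stable.Ch_willingFirms {P : Profile F W} (hs : ∀ w, (P.wp w).Substitutable)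
    {μ : Matching F W} (hμ : Stable P μ) (w : W) :
    (P.wp w).Ch (P.willingFirms μ.fm w) = μ.wm w := by
  rw [← Finset.union_eq_right.2 (hμ.wm_subset_willingFirms w)]
  refine (hs w).Ch_union_eq (hμ.1.2 w) fun f hf hfw hch => ?_
  exact hμ.2 w f ⟨fun h => hfw ((μ.compat f w).1 h), Profile.mem_willingFirms.1 hf, hch⟩

lemma le_deferredAcceptance_of_stable {P : Profile F W} (hs : P.Substitutable)
    {μ : Matching F W} (hμ : Stable P μ) :
    (μ.fm, OrderDual.toDual (P.willingFirms μ.fm)) ≤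
      deferredAcceptance P hs (μ.fm, OrderDual.toDual (P.willingFirms μ.fm)) := by
  refine ⟨fun f w hw => Profile.mem_willingWorkers.2 ?_, le_rfl⟩
  have hf : f ∈ P.willingFirms μ.fm w := hμ.wm_subset_willingFirms w ((μ.compat f w).1 hw)
  change f ∈ (P.wp w).Ch (insert f (P.willingFirms μ.fm w))
  rw [Finset.insert_eq_of_mem hf, hμ.Ch_willingFirms hs.2 w]
  exact (μ.compat f w).1 hw

theorem exists_firmOptimal (P : Profile F W) (hs : P.Substitutable) :
    ∃ μ : Matching F W, FirmOptimal P μ := by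
  let G := (deferredAcceptance P hs).gfp
  have hG : deferredAcceptance P hs G = G := (deferredAcceptance P hs).map_gfp
  refine ⟨matchingOfFixedPoint P (congrArg Prod.fst hG)
    (congrArg (fun X => OrderDual.ofDual X.2) hG), stable_matchingOfFixedPoint P _ _,
    fun μ hμ f => ?_⟩
  have hle : μ.fm f ⊆ G.1 f :=
    ((deferredAcceptance P hs).le_gfp (le_deferredAcceptance_of_stable hs hμ)).1 f
  exact ((P.fp f).Ch_max hle).imp Eq.symm id

end FirmOptimal

theorem Matching.ext_fm {F W : Type*} {μ₁ μ₂ : Matching F W} (h : μ₁.fm = μ₂.fm) : μ₁ = μ₂ := by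
  obtain ⟨fm₁, wm₁, compat₁⟩ := μ₁
  obtain ⟨fm₂, wm₂, compat₂⟩ := μ₂
  obtain rfl : fm₁ = fm₂ := h
  obtain rfl : wm₁ = wm₂ := funext fun w => Finset.ext fun f => by rw [← compat₁, compat₂]
  rfl

lemma Matching.wm_eq_filter {F W : Type*} [Fintype F] [DecidableEq W] (μ : Matching F W) (w : W) :
    μ.wm w = Finset.univ.filter fun f => w ∈ μ.fm f := by
  ext f
  simp [← μ.compat]

section Rule

variable {F W : Type*} [DecidableEq F] [Fintype F] [DecidableEq W] [Fintype W]

instance : Inhabited (Matching F W) := ⟨⟨fun _ => ∅, fun _ => ∅, by simp⟩⟩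

theorem FirmOptimal.eq {P : Profile F W} {μ₁ μ₂ : Matching F W}
    (h₁ : FirmOptimal P μ₁) (h₂ : FirmOptimal P μ₂) : μ₁ = μ₂ := by
  refine Matching.ext_fm (funext fun f => ?_)
  rcases h₁.2 μ₂ h₂.1 f with h | h
  · exact h
  · rcases h₂.2 μ₁ h₁.1 f with h' | h'
    · exact h'.symm
    · exact absurd h' ((P.fp f).gt_asymm h)

noncomputable def firmOptimalRule (P : Profile F W) : Matching F W :=
  Classical.epsilon (FirmOptimal P)

theorem firmOptimal_firmOptimalRule {P : Profile F W} (hs : P.Substitutable) :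
    FirmOptimal P (firmOptimalRule P) :=
  Classical.epsilon_spec (exists_firmOptimal P hs)

theorem firmOptimalRule_eq {P : Profile F W} {μ : Matching F W} (hs : P.Substitutable)
    (hμ : FirmOptimal P μ) : firmOptimalRule P = μ :=
  (firmOptimal_firmOptimalRule hs).eq hμ

theorem Profile.updateWorker_wp_self (P : Profile F W) (w : W) (p : Pref F) :
    (P.updateWorker w p).wp w = p :=
  Function.update_self _ _ _

theorem Profile.updateWorker_wp_of_ne {P : Profile F W} {w w' : W} (hw : w' ≠ w) (p : Pref F) :
    (P.updateWorker w p).wp w' = P.wp w' :=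
  Function.update_of_ne hw _ _

theorem Profile.updateWorker_self (P : Profile F W) (w : W) : P.updateWorker w (P.wp w) = P := by
  simp [Profile.updateWorker]

end Rule

section OfRank

variable {α : Type*} [DecidableEq α] [Fintype α]

def Pref.ofRank (r : Finset α → ℕ) (hr : Function.Injective r) : Pref α where
  gt S T := r S < r T
  isSTO :=
    { trichotomous := fun _ _ h₁ h₂ => hr (le_antisymm (not_lt.1 h₂) (not_lt.1 h₁))
      irrefl := fun _ => lt_irrefl _
      trans := fun _ _ _ => lt_trans }

/-- A computable form of `(Pref.ofRank r hr).Ch`, for `decide`. -/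
def rankCh (r : Finset α → ℕ) (S : Finset α) : Finset α :=
  (S.powerset.filter fun T => ∀ U ∈ S.powerset, r T ≤ r U).sup id

lemma Pref.Ch_ofRank (r : Finset α → ℕ) (hr : Function.Injective r) (S : Finset α) :
    (Pref.ofRank r hr).Ch S = rankCh r S := by
  obtain ⟨T, hT, hmin⟩ := S.powerset.exists_min_image r ⟨∅, Finset.empty_mem_powerset S⟩
  have hfilter : S.powerset.filter (fun T => ∀ U ∈ S.powerset, r T ≤ r U) = {T} := by
    ext U
    simp only [Finset.mem_filter, Finset.mem_singleton]
    constructor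
    · rintro ⟨hU, hUmin⟩
      exact hr (le_antisymm (hUmin T hT) (hmin U hU))
    · rintro rfl
      exact ⟨hT, hmin⟩
  rw [rankCh, hfilter, Finset.sup_singleton, id]
  refine (Pref.ofRank r hr).Ch_eq_of (Finset.mem_powerset.1 hT) fun U hU hne => ?_
  exact lt_of_le_of_ne (hmin U (Finset.mem_powerset.2 hU)) fun e => hne (hr e).symm

end OfRank

section Example

def firmRank : Fin 2 → Finset (Fin 3) → ℕ := fun f S =>
  if f = 0 then
    (if S = {2} then 0 else if S = {0,1} then 1 else if S = {1} then 2
     else if S = {0} then 3 else if S = (∅ : Finset (Fin 3)) then 4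
     else if S = {0,1,2} then 5 else if S = {1,2} then 6 else 7)
  else
    (if S = {1} then 0 else if S = {2} then 1 else if S = (∅ : Finset (Fin 3)) then 2
     else if S = {0,2} then 3 else if S = {0,1} then 4 else if S = {0} then 5
     else if S = {0,1,2} then 6 else 7)

def workerRank : Fin 3 → Finset (Fin 2) → ℕ := fun w S =>
  if w = 0 then
    (if S = {0} then 0 else if S = (∅ : Finset (Fin 2)) then 1
     else if S = {1} then 2 else 3)
  else if w = 1 then
    (if S = {0} then 0 else if S = {1} then 1
     else if S = (∅ : Finset (Fin 2)) then 2 else 3)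
  else
    (if S = {1} then 0 else if S = {0} then 1
     else if S = (∅ : Finset (Fin 2)) then 2 else 3)

lemma firmRank_injective : ∀ f, Function.Injective (firmRank f) := by decide

lemma workerRank_injective : ∀ w, Function.Injective (workerRank w) := by decide

def exP : Profile (Fin 2) (Fin 3) :=
  ⟨fun f => Pref.ofRank (firmRank f) (firmRank_injective f),
    fun w => Pref.ofRank (workerRank w) (workerRank_injective w)⟩

lemma exP_fp_Ch (f : Fin 2) (S : Finset (Fin 3)) : (exP.fp f).Ch S = rankCh (firmRank f) S :=
  Pref.Ch_ofRank _ (firmRank_injective f) _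

lemma exP_wp_Ch (w : Fin 3) (S : Finset (Fin 2)) : (exP.wp w).Ch S = rankCh (workerRank w) S :=
  Pref.Ch_ofRank _ (workerRank_injective w) _

lemma exP_wp_unitDemand (w : Fin 3) : (exP.wp w).UnitDemand := by
  revert w
  show ∀ (w : Fin 3) (S : Finset (Fin 2)), 2 ≤ S.card → workerRank w ∅ < workerRank w S
  decide

lemma exP_fp_substitutable (f : Fin 2) : (exP.fp f).Substitutable := by
  intro S w w'
  simp only [exP_fp_Ch]
  revert f S w w'
  decide

lemma substitutable_exP_updateWorker_zero {p : Pref (Fin 2)} (hp : p.UnitDemand) :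
    (exP.updateWorker 0 p).Substitutable := by
  refine ⟨exP_fp_substitutable, fun w => Pref.UnitDemand.substitutable ?_⟩
  by_cases hw : w = 0
  · rwa [hw, Profile.updateWorker_wp_self]
  · rw [Profile.updateWorker_wp_of_ne hw]
    exact exP_wp_unitDemand w

def μFex : Matching (Fin 2) (Fin 3) := ⟨![{2}, {1}], ![∅, {1}, {0}], by decide⟩

def μWex : Matching (Fin 2) (Fin 3) := ⟨![{0,1}, {2}], ![{0}, {0}, {1}], by decide⟩

lemma stable_exP_updateWorker_zero (p : Pref (Fin 2)) : Stable (exP.updateWorker 0 p) μFex := by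
  refine ⟨⟨fun f => ?_, fun w => ?_⟩, ?_⟩
  · change (exP.fp f).Ch (μFex.fm f) = μFex.fm f
    rw [exP_fp_Ch]
    revert f
    decide
  · by_cases hw : w = 0
    · rw [hw, Profile.updateWorker_wp_self]
      exact p.Ch_empty
    · rw [Profile.updateWorker_wp_of_ne hw, exP_wp_Ch]
      revert w
      decide
  · rintro w f ⟨hnm, hwf, -⟩
    change w ∈ (exP.fp f).Ch (insert w (μFex.fm f)) at hwf
    rw [exP_fp_Ch] at hwf
    revert w f
    decide

lemma firmOptimal_exP_updateWorker_zero (p : Pref (Fin 2)) :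
    FirmOptimal (exP.updateWorker 0 p) μFex := by
  refine ⟨stable_exP_updateWorker_zero p, fun μ _ f => ?_⟩
  have hbest : ∀ (f : Fin 2) (S : Finset (Fin 3)),
      μFex.fm f = S ∨ firmRank f (μFex.fm f) < firmRank f S := by decide
  exact hbest f (μ.fm f)

/-- `Stable exP`, in a decidable form on the firms' side of a matching. -/
def StableExP (g : Fin 2 → Finset (Fin 3)) : Prop :=
  let wm : Fin 3 → Finset (Fin 2) := fun w => Finset.univ.filter fun f => w ∈ g f
  ((∀ f, rankCh (firmRank f) (g f) = g f) ∧ ∀ w, rankCh (workerRank w) (wm w) = wm w) ∧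
    ∀ w f, ¬ (w ∉ g f ∧ w ∈ rankCh (firmRank f) (insert w (g f)) ∧
      f ∈ rankCh (workerRank w) (insert f (wm w)))

instance (g : Fin 2 → Finset (Fin 3)) : Decidable (StableExP g) := by
  unfold StableExP
  infer_instance

lemma stable_exP_iff (μ : Matching (Fin 2) (Fin 3)) : Stable exP μ ↔ StableExP μ.fm := by
  simp only [Stable, IndRational, Blocks, StableExP, exP_fp_Ch, exP_wp_Ch, μ.wm_eq_filter]

lemma workerOptimal_exP : WorkerOptimal exP μWex := by
  refine ⟨(stable_exP_iff μWex).2 (by decide), fun μ hμ w => ?_⟩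
  have hstable : ∀ g, StableExP g → g = μFex.fm ∨ g = μWex.fm := by decide
  change _ ∨ workerRank w _ < workerRank w _
  rw [μ.wm_eq_filter]
  rcases hstable μ.fm ((stable_exP_iff μ).1 hμ) with hg | hg <;> rw [hg] <;> revert w <;> decide

end Example

/-- The General Manipulability Theorem is false for merely
substitutable preferences: there is a many-to-one matching market `(F, W, ≻)` with
substitutable preferences (workers finding every set of two or more firms
unacceptable), a stable matching rule `h` — namely the firm-optimal stable rule,
which selects the firm-optimal stable matching at every substitutable profile —
and a worker `a` with `h(≻)(a) ≠ μ_W(≻)(a)`, such that no (many-to-one) misreport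
`≻'_a` gives `a` a strictly `≻_a`-better assignment than `h(≻)(a)`. -/
theorem stmt13 :
    ∃ (nF nW : ℕ) (P : Profile (Fin nF) (Fin nW))
      (h : Profile (Fin nF) (Fin nW) → Matching (Fin nF) (Fin nW))
      (μW : Matching (Fin nF) (Fin nW)) (a : Fin nW),
      P.Substitutable ∧
      (∀ w : Fin nW, ∀ S : Finset (Fin nF), 2 ≤ S.card → (P.wp w).gt ∅ S) ∧
      (∀ P' : Profile (Fin nF) (Fin nW), P'.Substitutable → FirmOptimal P' (h P')) ∧
      WorkerOptimal P μW ∧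
      (h P).wm a ≠ μW.wm a ∧
      (∀ p' : Pref (Fin nF),
        (∀ S : Finset (Fin nF), 2 ≤ S.card → p'.gt ∅ S) →
        ¬ (P.wp a).gt ((h (P.updateWorker a p')).wm a) ((h P).wm a)) := by
  have hsub : exP.Substitutable := by
    simpa only [Profile.updateWorker_self] using
      substitutable_exP_updateWorker_zero (exP_wp_unitDemand 0)
  have hopt : FirmOptimal exP μFex := by
    simpa only [Profile.updateWorker_self] using firmOptimal_exP_updateWorker_zero (exP.wp 0)
  have hrule : firmOptimalRule exP = μFex := firmOptimalRule_eq hsub hopt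
  refine ⟨2, 3, exP, firmOptimalRule, μWex, 0, hsub, exP_wp_unitDemand,
    fun _ => firmOptimal_firmOptimalRule, workerOptimal_exP, by rw [hrule]; decide,
    fun p hp => ?_⟩
  rw [hrule, firmOptimalRule_eq (substitutable_exP_updateWorker_zero hp)
    (firmOptimal_exP_updateWorker_zero p)]
  exact (exP.wp 0).gt_irrefl _
end
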